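/- Fix positive integers n, r. For all sufficiently large integers s, ⌊(Σ_{k=n}^∞ 1/f_{rk}(s,-1)^2)^{-1}⌋ = f_{rn}(s,-1)^2 - f_{r(n-1)}(s,-1)^2 - 1. -/
import Mathlib


/-- Generalized Fibonacci sequence: f 0 = 0, f 1 = 1, f (n+2) = s * f (n+1) + t * f n. -/
def genFib (s t : ℤ) : ℕ → ℤ
  | 0 => 0
  | 1 => 1
  | n + 2 => s * genFib s t (n + 1) + t * genFib s t n

namespace FT

lemma genFib_zero (s t : ℤ) : genFib s t 0 = 0 := rfl
lemma genFib_one (s t : ℤ) : genFib s t 1 = 1 := rfl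
lemma genFib_succ2 (s t : ℤ) (k : ℕ) :
    genFib s t (k + 2) = s * genFib s t (k + 1) + t * genFib s t k := rfl

lemma genFib_add (s t : ℤ) : ∀ m k, genFib s t (m + k + 1) =
    genFib s t (m + 1) * genFib s t (k + 1) + t * genFib s t m * genFib s t k := by
  intro m
  induction m using Nat.twoStepInduction with
  | zero =>
    intro k
    simp [genFib_zero, genFib_one]
  | one =>
    intro k
    rw [show 1 + k + 1 = k + 2 from by omega, genFib_succ2]
    show _ = genFib s t 2 * _ + _
    rw [show (2:ℕ) = 0 + 2 from rfl, genFib_succ2]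
    simp [genFib_zero, genFib_one]
  | more m ih1 ih2 =>
    intro k
    rw [show m + 2 + k + 1 = (m + k + 1) + 2 from by omega, genFib_succ2]
    rw [show m + k + 1 + 1 = m + 1 + k + 1 from by omega, ih2 k, ih1 k]
    rw [show m + 2 + 1 = (m + 1) + 2 from by omega, genFib_succ2 s t (m + 1),
      show m + 1 + 1 = m + 2 from rfl, genFib_succ2 s t m]
    ring


section
variable {s : ℤ} (hs : 5 ≤ s)

-- f := genFib s (-1)

include hs

lemma growth : ∀ k, 0 ≤ genFib s (-1) k ∧ 2 * genFib s (-1) k ≤ genFib s (-1) (k + 1) := by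
  intro k
  induction k using Nat.twoStepInduction with
  | zero => simp [genFib_zero, genFib_one]
  | one => rw [show (1:ℕ)+1 = 0+2 from rfl, genFib_succ2]
           simp [genFib_zero, genFib_one]; linarith
  | more m ih1 ih2 =>
    obtain ⟨h1, h2⟩ := ih1
    obtain ⟨h3, h4⟩ := ih2
    constructor
    · linarith
    · rw [show m + 2 + 1 = (m+1) + 2 from rfl, genFib_succ2, genFib_succ2]
      have hle : genFib s (-1) (m+1) ≤ genFib s (-1) (m+2) := by rw [genFib_succ2]; nlinarith
      rw [genFib_succ2] at hle ⊢
      nlinarith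

lemma f_nonneg (k : ℕ) : 0 ≤ genFib s (-1) k := (growth hs k).1
lemma f_double (k : ℕ) : 2 * genFib s (-1) k ≤ genFib s (-1) (k + 1) := (growth hs k).2
lemma f_mono : Monotone (genFib s (-1)) := by
  apply monotone_nat_of_le_succ
  intro k
  have := f_double hs k
  have := f_nonneg hs k
  linarith

lemma f_one_le (k : ℕ) (hk : 1 ≤ k) : 1 ≤ genFib s (-1) k := by
  have := f_mono hs hk
  simpa [genFib_one] using this

lemma f_pow_le (m : ℕ) : ∀ j, 2 ^ j * genFib s (-1) m ≤ genFib s (-1) (m + j) := by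
  intro j
  induction j with
  | zero => simp
  | succ j ih =>
    have h := f_double hs (m + j)
    have h0 := f_nonneg hs m
    calc 2 ^ (j+1) * genFib s (-1) m = 2 * (2 ^ j * genFib s (-1) m) := by ring
    _ ≤ 2 * genFib s (-1) (m + j) := by nlinarith [pow_pos (by norm_num : (0:ℤ) < 2) j]
    _ ≤ genFib s (-1) (m + j + 1) := h

-- invariant: Cassini form
omit hs in
lemma f_inv : ∀ k, genFib s (-1) (k+1) ^ 2 - s * genFib s (-1) (k+1) * genFib s (-1) k + genFib s (-1) k ^ 2 = 1 := by
  intro k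
  induction k with
  | zero => simp [genFib_zero, genFib_one]
  | succ k ih =>
    rw [genFib_succ2]
    ring_nf
    ring_nf at ih
    linarith [ih]

omit hs in
lemma f_step (m q : ℕ) : genFib s (-1) (m + q + 1) =
    genFib s (-1) (m + 1) * genFib s (-1) (q + 1) - genFib s (-1) m * genFib s (-1) q := by
  rw [genFib_add]; ring

omit hs in
lemma f_rec (q m : ℕ) : genFib s (-1) (m + 2 * (q + 1)) =
    (genFib s (-1) (q + 2) - genFib s (-1) q) * genFib s (-1) (m + (q + 1))
      - genFib s (-1) m := by
  rw [show m + 2 * (q + 1) = (m + (q + 1)) + q + 1 from by omega, f_step (m + (q + 1)) q,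
    show m + (q + 1) + 1 = (m + 1) + q + 1 from by omega, f_step (m + 1) q,
    show m + (q + 1) = m + q + 1 from rfl, f_step m q,
    genFib_succ2 s (-1) m, genFib_succ2 s (-1) q]
  linear_combination (-(genFib s (-1) m)) * f_inv q

omit hs in
lemma f_cassini (q m : ℕ) : genFib s (-1) (m + 2 * (q + 1)) * genFib s (-1) m =
    genFib s (-1) (m + (q + 1)) ^ 2 - genFib s (-1) (q + 1) ^ 2 := by
  rw [show m + 2 * (q + 1) = (m + (q + 1)) + q + 1 from by omega, f_step (m + (q + 1)) q,
    show m + (q + 1) + 1 = (m + 1) + q + 1 from by omega, f_step (m + 1) q,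
    show m + (q + 1) = m + q + 1 from rfl, f_step m q,
    genFib_succ2 s (-1) m]
  linear_combination (-(genFib s (-1) (q+1))^2) * f_inv m

end

section KeysAux

lemma keyA (u v w D : ℤ) (hC : w * u = v ^ 2 - D) (hD : 1 ≤ D)
    (hDv : D ≤ v ^ 2) :
    v ^ 2 * (w ^ 2 - 2 * v ^ 2 + u ^ 2) < (w ^ 2 - v ^ 2) * (v ^ 2 - u ^ 2) := by
  have hid : (w ^ 2 - v ^ 2) * (v ^ 2 - u ^ 2) - v ^ 2 * (w ^ 2 - 2 * v ^ 2 + u ^ 2)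
      = D * (2 * v ^ 2 - D) := by
    linear_combination (-(w * u) - v ^ 2 + D) * hC
  nlinarith [hid, hD, hDv, sq_nonneg v]

lemma keyB (u v w L D : ℤ) (hu : 0 ≤ u) (huv : 2 * u ≤ v) (hv : 1 ≤ v)
    (hw : w = L * v - u) (hC : w * u = v ^ 2 - D) (hD : 1 ≤ D) (hDv : D ≤ v ^ 2)
    (hL : 4 * D ≤ (L - 1) ^ 2) (hL3 : 3 ≤ L) :
    (v ^ 2 - u ^ 2 - 1) * (w ^ 2 - v ^ 2 - 1) < v ^ 2 * (w ^ 2 - 2 * v ^ 2 + u ^ 2) := by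
  have huv' : u ≤ v := by linarith
  have hwge : (L - 1) * v ≤ w := by rw [hw]; nlinarith
  have h0 : (0:ℤ) ≤ (L - 1) * v := by nlinarith
  have hwsq : 4 * D * v ^ 2 ≤ w ^ 2 := by
    nlinarith [mul_le_mul hwge hwge h0 (le_trans h0 hwge), sq_nonneg v]
  have hu2 : 4 * u ^ 2 ≤ v ^ 2 := by nlinarith
  have hid : v ^ 2 * (w ^ 2 - 2 * v ^ 2 + u ^ 2) - (v ^ 2 - u ^ 2 - 1) * (w ^ 2 - v ^ 2 - 1)
      = -(D * (2 * v ^ 2 - D)) + w ^ 2 - u ^ 2 - 1 := by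
    linear_combination (w * u + v ^ 2 - D) * hC
  have hfin : 0 < w ^ 2 - u ^ 2 - 1 - D * (2 * v ^ 2 - D) := by
    nlinarith [hwsq, hu2, mul_nonneg (by linarith : (0:ℤ) ≤ D - 1) (sq_nonneg v), hD, sq_nonneg v, hv]
  linarith [hid, hfin]

lemma keyC (u v w : ℤ) (hv : 0 ≤ v) (hw : 2 * v ≤ w) :
    v ^ 2 - u ^ 2 ≤ w ^ 2 - v ^ 2 := by nlinarith [sq_nonneg u]

open Filter in
lemma telescope (c : ℕ → ℝ) (hm : ∀ k, c (k + 1) ≤ c k)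
    (hc : Tendsto c atTop (nhds 0)) : HasSum (fun k => c k - c (k + 1)) (c 0) := by
  have hanti : Antitone c := antitone_nat_of_succ_le hm
  have hnn : ∀ m, 0 ≤ c m := by
    intro m
    refine le_of_tendsto hc ?_
    filter_upwards [eventually_ge_atTop m] with j hj
    exact hanti hj
  have hsum : Summable (fun k => c k - c (k + 1)) := by
    apply summable_of_sum_range_le (c := c 0) (fun k => sub_nonneg.2 (hm k))
    intro m
    rw [Finset.sum_range_sub' c]
    linarith [hnn m]
  rw [Summable.hasSum_iff_tendsto_nat hsum]
  have : (fun m => ∑ i ∈ Finset.range m, (c i - c (i + 1))) = fun m => c 0 - c m := by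
    funext m; exact Finset.sum_range_sub' c m
  rw [this]
  simpa using tendsto_const_nhds.sub hc

open Filter in
lemma main_aux (a : ℕ → ℤ) (L D : ℤ)
    (hrec : ∀ j, a (j + 2) = L * a (j + 1) - a j)
    (hcas : ∀ j, a (j + 2) * a j = a (j + 1) ^ 2 - D)
    (hdbl : ∀ j, 2 * a j ≤ a (j + 1))
    (h0 : 0 ≤ a 0) (h1 : 1 ≤ a 1)
    (hD1 : 1 ≤ D) (hDv : ∀ j, D ≤ a (j + 1) ^ 2)
    (hL3 : 3 ≤ L) (hL4 : 4 * D ≤ (L - 1) ^ 2) :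
    ⌊(∑' k : ℕ, (1 : ℝ) / ((a (k + 1) : ℝ)) ^ 2)⁻¹⌋ = a 1 ^ 2 - a 0 ^ 2 - 1 := by
  -- basic positivity
  have hnn : ∀ j, 0 ≤ a j := by
    intro j
    cases j with
    | zero => exact h0
    | succ j =>
      induction j with
      | zero => linarith
      | succ j ih => have := hdbl (j + 1); omega
  have ha1 : ∀ j, 1 ≤ a (j + 1) := by
    intro j
    induction j with
    | zero => exact h1
    | succ j ih => have := hdbl (j + 1); omega
  have hag : ∀ j, (2 : ℤ) ^ j ≤ a (j + 1) := by
    intro j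
    induction j with
    | zero => simpa using h1
    | succ j ih =>
      have := hdbl (j + 1)
      calc (2:ℤ) ^ (j+1) = 2 * 2 ^ j := by ring
      _ ≤ 2 * a (j + 1) := by linarith
      _ ≤ a (j + 2) := this
  -- b positivity and monotonicity (inline)
  have hbpos : ∀ k, 0 < a (k + 1) ^ 2 - a k ^ 2 := by
    intro k
    nlinarith [hdbl k, hnn k, ha1 k]
  have hbmono : ∀ k, a (k + 1) ^ 2 - a k ^ 2 ≤ a (k + 2) ^ 2 - a (k + 1) ^ 2 :=
    fun k => keyC (a k) (a (k + 1)) (a (k + 2)) (hnn (k + 1)) (hdbl (k + 1))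
  have hbge : ∀ k, (2 : ℤ) ^ k ≤ a (k + 1) ^ 2 - a k ^ 2 := by
    intro k
    cases k with
    | zero =>
      have := hbpos 0
      norm_num
      linarith
    | succ k =>
      have h1' := hag (k + 1)
      have h2' := hdbl (k + 1)
      have h3' := hnn (k + 1)
      have hX : (2:ℤ) ≤ 2 ^ (k + 1) := by
        calc (2:ℤ) = 2 ^ 1 := by norm_num
        _ ≤ 2 ^ (k + 1) := pow_le_pow_right₀ (by norm_num) (by omega)
      have hXnn : (0:ℤ) ≤ 2 ^ (k + 1) := by positivity
      have p1 : 0 ≤ (a (k + 2) - 2 * a (k + 1)) * (a (k + 2) + 2 * a (k + 1)) :=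
        mul_nonneg (by linarith) (by linarith)
      have p2 : (2:ℤ) ^ (k+1) * 2 ^ (k+1) ≤ a (k + 2) * a (k + 2) :=
        mul_le_mul h1' h1' hXnn (by linarith)
      have p3 : (0:ℤ) ≤ 2 ^ (k+1) * (3 * 2 ^ (k+1) - 4) :=
        mul_nonneg hXnn (by linarith)
      nlinarith [p1, p2, p3]
  -- real level
  have haR : ∀ k, (1:ℝ) ≤ (a (k + 1) : ℝ) := fun k => by exact_mod_cast ha1 k
  have hgpos : ∀ k : ℕ, (0:ℝ) < 1 / ((a (k + 1) : ℝ)) ^ 2 := by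
    intro k
    have hx : (0:ℝ) < (a (k + 1) : ℝ) := lt_of_lt_of_le one_pos (haR k)
    positivity
  have hcast2 : ∀ k : ℕ, ((2:ℝ)) ^ k ≤ (a (k + 1) : ℝ) := fun k => by exact_mod_cast hag k
  have hgle : ∀ k : ℕ, (1:ℝ) / ((a (k + 1) : ℝ)) ^ 2 ≤ (1/4 : ℝ) ^ k := by
    intro k
    have h2 : (0:ℝ) < (2:ℝ) ^ k := by positivity
    have h4 : ((4:ℝ)) ^ k ≤ ((a (k + 1) : ℝ)) ^ 2 := by
      have : ((4:ℝ)) ^ k = (2:ℝ) ^ k * (2:ℝ) ^ k := by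
        rw [← mul_pow]; norm_num
      rw [this]
      nlinarith [hcast2 k]
    calc (1:ℝ) / ((a (k + 1) : ℝ)) ^ 2 ≤ 1 / (4:ℝ) ^ k :=
          one_div_le_one_div_of_le (by positivity) h4
      _ = (1/4 : ℝ) ^ k := by rw [div_pow]; norm_num
  have hsumg : Summable (fun k : ℕ => (1:ℝ) / ((a (k + 1) : ℝ)) ^ 2) :=
    Summable.of_nonneg_of_le (fun k => (hgpos k).le) hgle
      (summable_geometric_of_lt_one (by norm_num) (by norm_num))
  have hTpos : 0 < ∑' k : ℕ, (1:ℝ) / ((a (k + 1) : ℝ)) ^ 2 :=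
    Summable.tsum_pos hsumg (fun k => (hgpos k).le) 0 (hgpos 0)
  -- c sequence
  have hbposR : ∀ k, (0:ℝ) < (a (k + 1) : ℝ) ^ 2 - (a k : ℝ) ^ 2 := by
    intro k; exact_mod_cast hbpos k
  have hbmonoR : ∀ k, (a (k + 1) : ℝ) ^ 2 - (a k : ℝ) ^ 2 ≤ (a (k + 2) : ℝ) ^ 2 - (a (k + 1) : ℝ) ^ 2 := by
    intro k; exact_mod_cast hbmono k
  have hbgeR : ∀ k, (2:ℝ) ^ k ≤ (a (k + 1) : ℝ) ^ 2 - (a k : ℝ) ^ 2 := by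
    intro k; exact_mod_cast hbge k
  have hcmono : ∀ k, (1:ℝ) / ((a (k + 2) : ℝ) ^ 2 - (a (k + 1) : ℝ) ^ 2)
      ≤ 1 / ((a (k + 1) : ℝ) ^ 2 - (a k : ℝ) ^ 2) :=
    fun k => one_div_le_one_div_of_le (hbposR k) (hbmonoR k)
  have hczero : Filter.Tendsto (fun k => (1:ℝ) / ((a (k + 1) : ℝ) ^ 2 - (a k : ℝ) ^ 2))
      Filter.atTop (nhds 0) := by
    apply squeeze_zero (g := fun k => (1/2 : ℝ) ^ k)
        (fun k => (div_pos one_pos (hbposR k)).le)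
    · intro k
      have := hbgeR k
      have h2 : (0:ℝ) < (2:ℝ) ^ k := by positivity
      calc (1:ℝ) / ((a (k + 1) : ℝ) ^ 2 - (a k : ℝ) ^ 2) ≤ 1 / (2:ℝ) ^ k :=
            one_div_le_one_div_of_le h2 this
        _ = (1/2 : ℝ) ^ k := by rw [div_pow]; norm_num
    · exact tendsto_pow_atTop_nhds_zero_of_lt_one (by norm_num) (by norm_num)
  have htel := telescope _ hcmono hczero
  -- inequality A, real version
  have hA : ∀ k, (1:ℝ) / ((a (k + 1) : ℝ) ^ 2 - (a k : ℝ) ^ 2)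
      - 1 / ((a (k + 2) : ℝ) ^ 2 - (a (k + 1) : ℝ) ^ 2) < 1 / ((a (k + 1) : ℝ)) ^ 2 := by
    intro k
    have hZ := keyA (a k) (a (k + 1)) (a (k + 2)) D (hcas k) hD1 (hDv k)
    have hb1 := hbposR k
    have hb2 := hbposR (k + 1)
    have hvR : (0:ℝ) < ((a (k + 1) : ℝ)) ^ 2 := by nlinarith [haR k]
    rw [div_sub_div _ _ (ne_of_gt hb1) (ne_of_gt hb2), div_lt_div_iff₀ (mul_pos hb1 hb2) hvR]
    have hZR : ((a (k + 1) : ℝ)) ^ 2 * (((a (k + 2) : ℝ)) ^ 2 - 2 * ((a (k + 1) : ℝ)) ^ 2 + ((a k : ℝ)) ^ 2)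
        < (((a (k + 2) : ℝ)) ^ 2 - ((a (k + 1) : ℝ)) ^ 2) * (((a (k + 1) : ℝ)) ^ 2 - ((a k : ℝ)) ^ 2) := by
      exact_mod_cast hZ
    nlinarith [hZR]
  have hlowlt : 1 / ((a 1 : ℝ) ^ 2 - (a 0 : ℝ) ^ 2) < ∑' k : ℕ, (1:ℝ) / ((a (k + 1) : ℝ)) ^ 2 := by
    have h := Summable.tsum_lt_tsum (fun k => (hA k).le) (hA 0) htel.summable hsumg
    rwa [htel.tsum_eq] at h
  -- case split on b 0
  rcases eq_or_lt_of_le (by linarith [hbpos 0] : (1:ℤ) ≤ a 1 ^ 2 - a 0 ^ 2) with hb0 | hb0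
  · -- b 0 = 1 : a 1 = 1, a 0 = 0
    have h10 : a 0 + 1 ≤ a 1 := by
      have h' := hdbl 0
      have h'' := ha1 0
      simp only [Nat.zero_add] at h' h''
      have := hnn 0
      omega
    have ha1eq : a 1 = 1 := by
      nlinarith [mul_self_nonneg (a 0), mul_le_mul h10 h10 (by linarith [hnn 0]) (by linarith [ha1 0])]
    have ha0eq : a 0 = 0 := by nlinarith [hnn 0]
    have hTgt1 : 1 < ∑' k : ℕ, (1:ℝ) / ((a (k + 1) : ℝ)) ^ 2 := by
      have hsum2 := Summable.sum_le_tsum (Finset.range 2) (fun i _ => (hgpos i).le) hsumg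
      have hexp : ∑ i ∈ Finset.range 2, (1:ℝ) / ((a (i + 1) : ℝ)) ^ 2
          = 1 / ((a 1 : ℝ)) ^ 2 + 1 / ((a 2 : ℝ)) ^ 2 := by
        rw [Finset.sum_range_succ, Finset.sum_range_one]
      rw [hexp] at hsum2
      have hg1 : (1:ℝ) / ((a 1 : ℝ)) ^ 2 = 1 := by rw [ha1eq]; norm_num
      have hg2 : (0:ℝ) < 1 / ((a 2 : ℝ)) ^ 2 := hgpos 1
      linarith
    rw [ha1eq, ha0eq]
    norm_num
    constructor
    · exact tsum_nonneg (fun k => by positivity)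
    · apply inv_lt_one_of_one_lt₀
      simpa [one_div] using hTgt1
  · -- 2 ≤ b 0
    have h2b : (2:ℤ) ≤ a 1 ^ 2 - a 0 ^ 2 := hb0
    have hball : ∀ k, (2:ℤ) ≤ a (k + 1) ^ 2 - a k ^ 2 := by
      intro k
      induction k with
      | zero => exact h2b
      | succ k ih => linarith [hbmono k]
    have hb1R : ∀ k, (1:ℝ) ≤ (a (k + 1) : ℝ) ^ 2 - (a k : ℝ) ^ 2 - 1 := by
      intro k
      have : (2:ℝ) ≤ (a (k + 1) : ℝ) ^ 2 - (a k : ℝ) ^ 2 := by exact_mod_cast hball k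
      linarith
    have hb1pos : ∀ k, (0:ℝ) < (a (k + 1) : ℝ) ^ 2 - (a k : ℝ) ^ 2 - 1 :=
      fun k => lt_of_lt_of_le one_pos (hb1R k)
    have hc'mono : ∀ k, (1:ℝ) / ((a (k + 2) : ℝ) ^ 2 - (a (k + 1) : ℝ) ^ 2 - 1)
        ≤ 1 / ((a (k + 1) : ℝ) ^ 2 - (a k : ℝ) ^ 2 - 1) :=
      fun k => one_div_le_one_div_of_le (hb1pos k) (by linarith [hbmonoR k])
    have hc'zero : Filter.Tendsto (fun k => (1:ℝ) / ((a (k + 1) : ℝ) ^ 2 - (a k : ℝ) ^ 2 - 1))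
        Filter.atTop (nhds 0) := by
      have hlim : Filter.Tendsto (fun k : ℕ => 2 * (1/2 : ℝ) ^ k) Filter.atTop (nhds 0) := by
        have := (tendsto_pow_atTop_nhds_zero_of_lt_one (by norm_num : (0:ℝ) ≤ 1/2)
          (by norm_num : (1/2:ℝ) < 1)).const_mul (2:ℝ)
        simpa using this
      apply squeeze_zero (fun k => (div_pos one_pos (hb1pos k)).le) _ hlim
      intro k
      have hbk := hbgeR k
      have hb2' : (2:ℝ) ≤ (a (k + 1) : ℝ) ^ 2 - (a k : ℝ) ^ 2 := by exact_mod_cast hball k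
      have h2 : (0:ℝ) < (2:ℝ) ^ k := by positivity
      have heq : 2 * (1/2 : ℝ) ^ k = 2 / (2:ℝ) ^ k := by
        rw [div_pow]; norm_num; ring
      rw [heq, div_le_div_iff₀ (hb1pos k) h2]
      nlinarith
    have htel' := telescope _ hc'mono hc'zero
    -- inequality B, real version
    have hB : ∀ k, (1:ℝ) / ((a (k + 1) : ℝ)) ^ 2
        < 1 / ((a (k + 1) : ℝ) ^ 2 - (a k : ℝ) ^ 2 - 1)
          - 1 / ((a (k + 2) : ℝ) ^ 2 - (a (k + 1) : ℝ) ^ 2 - 1) := by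
      intro k
      have hZ := keyB (a k) (a (k + 1)) (a (k + 2)) L D (hnn k) (hdbl k) (ha1 k)
        (by linarith [hrec k]) (hcas k) hD1 (hDv k) hL4 hL3
      have hb1 := hb1pos k
      have hb2 := hb1pos (k + 1)
      have hvR : (0:ℝ) < ((a (k + 1) : ℝ)) ^ 2 := by nlinarith [haR k]
      rw [div_sub_div _ _ (ne_of_gt hb1) (ne_of_gt hb2), div_lt_div_iff₀ hvR (mul_pos hb1 hb2)]
      have hZR : (((a (k + 1) : ℝ)) ^ 2 - ((a k : ℝ)) ^ 2 - 1) * (((a (k + 2) : ℝ)) ^ 2 - ((a (k + 1) : ℝ)) ^ 2 - 1)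
          < ((a (k + 1) : ℝ)) ^ 2 * (((a (k + 2) : ℝ)) ^ 2 - 2 * ((a (k + 1) : ℝ)) ^ 2 + ((a k : ℝ)) ^ 2) := by
        exact_mod_cast hZ
      nlinarith [hZR]
    have huplt : (∑' k : ℕ, (1:ℝ) / ((a (k + 1) : ℝ)) ^ 2)
        < 1 / ((a 1 : ℝ) ^ 2 - (a 0 : ℝ) ^ 2 - 1) := by
      have h := Summable.tsum_lt_tsum (fun k => (hB k).le) (hB 0) hsumg htel'.summable
      rwa [htel'.tsum_eq] at h
    -- finish via floor characterization
    rw [Int.floor_eq_iff]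
    constructor
    · have h1' : 1 / (1 / ((a 1 : ℝ) ^ 2 - (a 0 : ℝ) ^ 2 - 1))
          < 1 / (∑' k : ℕ, (1:ℝ) / ((a (k + 1) : ℝ)) ^ 2) :=
        one_div_lt_one_div_of_lt hTpos huplt
      rw [one_div_one_div] at h1'
      rw [inv_eq_one_div]
      push_cast
      linarith
    · have h2' : 1 / (∑' k : ℕ, (1:ℝ) / ((a (k + 1) : ℝ)) ^ 2)
          < 1 / (1 / ((a 1 : ℝ) ^ 2 - (a 0 : ℝ) ^ 2)) :=
        one_div_lt_one_div_of_lt (div_pos one_pos (hbposR 0)) hlowlt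
      rw [one_div_one_div] at h2'
      rw [inv_eq_one_div]
      push_cast
      linarith


end KeysAux
end FT

/-- For fixed n, r and all sufficiently large s, the floor of the reciprocal of the
tail sum of 1/f_{rk}(s,-1)² equals f_{rn}² - f_{r(n-1)}² - 1. -/
theorem fib_sq_tail_floor_eventually (n r : ℕ) (hn : 0 < n) (hr : 0 < r) :
    ∃ S : ℤ, ∀ s : ℤ, S ≤ s →
      ⌊(∑' k : ℕ, (1 : ℝ) / ((genFib s (-1) (r * (n + k)) : ℝ)) ^ 2)⁻¹⌋ =
        (genFib s (-1) (r * n)) ^ 2 - (genFib s (-1) (r * (n - 1))) ^ 2 - 1 := by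
  obtain ⟨N, rfl⟩ : ∃ N, n = N + 1 := ⟨n - 1, by omega⟩
  obtain ⟨q, rfl⟩ : ∃ q, r = q + 1 := ⟨r - 1, by omega⟩
  refine ⟨5, fun s hs => ?_⟩
  have hidx : ∀ k : ℕ, (q + 1) * (N + 1 + k) = (q + 1) * (N + (k + 1)) := fun k => by ring
  simp only [hidx, Nat.add_sub_cancel]
  set L : ℤ := genFib s (-1) (q + 2) - genFib s (-1) q with hL
  set D : ℤ := genFib s (-1) (q + 1) ^ 2 with hD
  have hP1 : (1:ℤ) ≤ genFib s (-1) (q + 1) := FT.f_one_le hs (q + 1) (by omega)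
  have hQ0 : (0:ℤ) ≤ genFib s (-1) q := FT.f_nonneg hs q
  have hdq : 2 * genFib s (-1) q ≤ genFib s (-1) (q + 1) := FT.f_double hs q
  have e5 : genFib s (-1) (q + 2) = s * genFib s (-1) (q + 1) + (-1) * genFib s (-1) q :=
    FT.genFib_succ2 s (-1) q
  have hsP : 5 * genFib s (-1) (q + 1) ≤ s * genFib s (-1) (q + 1) := by
    nlinarith [mul_nonneg (by linarith : (0:ℤ) ≤ s - 5) (by linarith : (0:ℤ) ≤ genFib s (-1) (q + 1))]
  have hL3 : 3 ≤ L := by rw [hL, e5]; linarith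
  have hL1 : 2 * genFib s (-1) (q + 1) ≤ L - 1 := by rw [hL, e5]; linarith
  have hL4 : 4 * D ≤ (L - 1) ^ 2 := by
    rw [hD]
    nlinarith [mul_nonneg (sub_nonneg.2 hL1) (by linarith : (0:ℤ) ≤ L - 1 + 2 * genFib s (-1) (q + 1))]
  have hrec : ∀ j, genFib s (-1) ((q + 1) * (N + (j + 2)))
      = L * genFib s (-1) ((q + 1) * (N + (j + 1))) - genFib s (-1) ((q + 1) * (N + j)) := by
    intro j
    rw [show (q + 1) * (N + (j + 2)) = (q + 1) * (N + j) + 2 * (q + 1) from by ring,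
      FT.f_rec q ((q + 1) * (N + j)),
      show (q + 1) * (N + j) + (q + 1) = (q + 1) * (N + (j + 1)) from by ring]
  have hcas : ∀ j, genFib s (-1) ((q + 1) * (N + (j + 2))) * genFib s (-1) ((q + 1) * (N + j))
      = genFib s (-1) ((q + 1) * (N + (j + 1))) ^ 2 - D := by
    intro j
    rw [show (q + 1) * (N + (j + 2)) = (q + 1) * (N + j) + 2 * (q + 1) from by ring,
      FT.f_cassini q ((q + 1) * (N + j)),
      show (q + 1) * (N + j) + (q + 1) = (q + 1) * (N + (j + 1)) from by ring]
  have hdbl : ∀ j, 2 * genFib s (-1) ((q + 1) * (N + j))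
      ≤ genFib s (-1) ((q + 1) * (N + (j + 1))) := by
    intro j
    have hp := FT.f_pow_le hs ((q + 1) * (N + j)) (q + 1)
    have h2q : (2:ℤ) ≤ 2 ^ (q + 1) := by
      calc (2:ℤ) = 2 ^ 1 := by norm_num
      _ ≤ 2 ^ (q + 1) := pow_le_pow_right₀ (by norm_num) (by omega)
    have hnn := FT.f_nonneg hs ((q + 1) * (N + j))
    rw [show (q + 1) * (N + (j + 1)) = (q + 1) * (N + j) + (q + 1) from by ring]
    nlinarith
  have hDv : ∀ j, D ≤ genFib s (-1) ((q + 1) * (N + (j + 1))) ^ 2 := by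
    intro j
    have hmono := FT.f_mono hs (show q + 1 ≤ (q + 1) * (N + (j + 1)) from
      Nat.le_mul_of_pos_right _ (by omega))
    rw [hD]
    exact pow_le_pow_left₀ (by linarith) hmono 2
  have key := FT.main_aux (fun j => genFib s (-1) ((q + 1) * (N + j))) L D hrec hcas hdbl
    (FT.f_nonneg hs _) (FT.f_one_le hs _ (Nat.one_le_iff_ne_zero.mpr (by positivity)))
    (by rw [hD]; nlinarith) hDv hL3 hL4
  simpa using key
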